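/- A left cancellative monoid M generated by a finite set A is finitely presentable if and only if its right Cayley graph over A is quasi-simply-connected (i.e., n-quasi-simply-connected for some n ∈ ℕ). -/

import Mathlib

/-- The element of the monoid `M` represented by the word `w` over the alphabet `A`,
where `f : A → M` interprets the letters. -/
def wordProd {A M : Type*} [Monoid M] (f : A → M) (w : List A) : M := (w.map f).prod

/-- One application of a defining relation from `R`: replace a factor `s` by `t`
where `(s, t) ∈ R` or `(t, s) ∈ R`. -/
def OneStep {A : Type*} (R : Set (List A × List A)) (w w' : List A) : Prop :=
  ∃ u s t v : List A, ((s, t) ∈ R ∨ (t, s) ∈ R) ∧ w = u ++ s ++ v ∧ w' = u ++ t ++ v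

/-- `⟨A | R⟩` (via `f : A → M`) is a presentation of `M`: `f` generates `M` (every element
is represented by a word) and two words represent the same element of `M` exactly when
they are related by the congruence generated by `R`. -/
def Presents {A M : Type*} [Monoid M] (f : A → M) (R : Set (List A × List A)) : Prop :=
  Function.Surjective (wordProd f) ∧
    ∀ u v : List A, Relation.ReflTransGen (OneStep R) u v ↔ wordProd f u = wordProd f v

/-- An atomic homotopy in the directed 2-complex `K_n` of the right Cayley graph of `M`
over `A`: a path in the Cayley graph starting at `x` and labelled `u ++ s ++ v` is replaced
by the path labelled `u ++ t ++ v`, where the subpaths labelled `s` and `t` starting at the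
vertex `x * (u)` are parallel (same endpoints) and `|s| + |t| ≤ n`, i.e. they form a
2-cell of `K_n`. -/
def KStep {A M : Type*} [Monoid M] (f : A → M) (n : ℕ) (p q : M × List A) : Prop :=
  ∃ (x : M) (u s t v : List A),
    p = (x, u ++ s ++ v) ∧ q = (x, u ++ t ++ v) ∧
    x * wordProd f u * wordProd f s = x * wordProd f u * wordProd f t ∧
    s.length + t.length ≤ n

/-- Two paths in the right Cayley graph (given as a start vertex together with a label
word over `A`) are homotopic in `K_n` if one can be transformed into the other by a finite
sequence of 2-cell replacements. -/
def Homotopic {A M : Type*} [Monoid M] (f : A → M) (n : ℕ) :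
    M × List A → M × List A → Prop :=
  Relation.ReflTransGen (KStep f n)

/-- The right Cayley graph of `M` over `A` is `n`-quasi-simply-connected: every pair of
parallel paths (same start vertex `x`, same end vertex) is homotopic in `K_n`. -/
def NQSC {A M : Type*} [Monoid M] (f : A → M) (n : ℕ) : Prop :=
  ∀ (x : M) (w₁ w₂ : List A), x * wordProd f w₁ = x * wordProd f w₂ →
    Homotopic f n (x, w₁) (x, w₂)

/-!
Relations of total length at most `n` that hold in `M` are exactly the `2`-cells of `K_n` read
from a base point, once left cancellation lets one forget the base point: the two parallel
subpaths from `x * (u)` labelled `s` and `t` satisfy `s = t` in `M`. So a finite presentation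
whose relations have total length at most `n` turns every derivation into a homotopy in `K_n`,
and conversely, if the Cayley graph is `n`-quasi-simply-connected, a homotopy between two
parallel paths from `1` is a derivation over the finite set of all relations of total length
at most `n`.
-/

variable {A M : Type*} [Monoid M]

lemma wordProd_append (f : A → M) (u v : List A) :
    wordProd f (u ++ v) = wordProd f u * wordProd f v := by
  simp [wordProd]

def boundedRelations (f : A → M) (n : ℕ) : Set (List A × List A) :=
  {p | wordProd f p.1 = wordProd f p.2 ∧ p.1.length + p.2.length ≤ n}

lemma boundedRelations_finite [Finite A] (f : A → M) (n : ℕ) :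
    (boundedRelations f n).Finite :=
  ((List.finite_length_le A n).prod (List.finite_length_le A n)).subset
    fun _ ⟨_, hlen⟩ => ⟨show _ ≤ n by omega, show _ ≤ n by omega⟩

variable {f : A → M}

lemma OneStep.mono {R R' : Set (List A × List A)} (hR : R ⊆ R') {w w' : List A}
    (h : OneStep R w w') : OneStep R' w w' := by
  obtain ⟨u, s, t, v, hst, rfl, rfl⟩ := h
  exact ⟨u, s, t, v, hst.imp (@hR _) (@hR _), rfl, rfl⟩

lemma OneStep.wordProd_eq {R : Set (List A × List A)}
    (hR : ∀ p ∈ R, wordProd f p.1 = wordProd f p.2) {w w' : List A} (h : OneStep R w w') :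
    wordProd f w = wordProd f w' := by
  obtain ⟨u, s, t, v, hst | hts, rfl, rfl⟩ := h
  · simp only [wordProd_append, hR _ hst]
  · simp only [wordProd_append, hR _ hts]

lemma wordProd_eq_of_reflTransGen_oneStep {R : Set (List A × List A)}
    (hR : ∀ p ∈ R, wordProd f p.1 = wordProd f p.2) {w w' : List A}
    (h : Relation.ReflTransGen (OneStep R) w w') : wordProd f w = wordProd f w' := by
  induction h with
  | refl => rfl
  | tail _ hstep ih => exact ih.trans (hstep.wordProd_eq hR)

lemma Presents.subset_boundedRelations {R : Set (List A × List A)} (hpres : Presents f R)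
    {n : ℕ} (hn : ∀ p ∈ R, p.1.length + p.2.length ≤ n) : R ⊆ boundedRelations f n :=
  fun p hp =>
    ⟨(hpres.2 p.1 p.2).1 (.single ⟨[], p.1, p.2, [], .inl hp, by simp, by simp⟩), hn p hp⟩

lemma OneStep.kStep {n : ℕ} {w w' : List A} (h : OneStep (boundedRelations f n) w w') (x : M) :
    KStep f n (x, w) (x, w') := by
  obtain ⟨u, s, t, v, ⟨hst, hlen⟩ | ⟨hts, hlen⟩, rfl, rfl⟩ := h
  · exact ⟨x, u, s, t, v, rfl, rfl, by rw [hst], hlen⟩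
  · exact ⟨x, u, s, t, v, rfl, rfl, by rw [hts], by dsimp only at hlen; omega⟩

lemma KStep.oneStep [IsLeftCancelMul M] {n : ℕ} {p q : M × List A} (h : KStep f n p q) :
    OneStep (boundedRelations f n) p.2 q.2 := by
  obtain ⟨x, u, s, t, v, rfl, rfl, heq, hlen⟩ := h
  exact ⟨u, s, t, v, .inl ⟨mul_left_cancel heq, hlen⟩, rfl, rfl⟩

lemma nqsc_of_presents [IsLeftCancelMul M] {R : Set (List A × List A)} (hR : R.Finite)
    (hpres : Presents f R) : ∃ n, NQSC f n := by
  obtain ⟨n, hn⟩ := (hR.image fun p => p.1.length + p.2.length).bddAbove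
  have hsub := hpres.subset_boundedRelations fun p hp => hn ⟨p, hp, rfl⟩
  refine ⟨n, fun x w₁ w₂ hx => ?_⟩
  have hderiv := (hpres.2 w₁ w₂).2 (mul_left_cancel hx)
  exact hderiv.lift (x, ·) fun _ _ h => (h.mono hsub).kStep x

lemma presents_boundedRelations [IsLeftCancelMul M] (hgen : Function.Surjective (wordProd f))
    {n : ℕ} (hq : NQSC f n) : Presents f (boundedRelations f n) := by
  refine ⟨hgen, fun u v =>
    ⟨wordProd_eq_of_reflTransGen_oneStep fun _ hp => hp.1, fun h => ?_⟩⟩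
  have hhom : Homotopic f n (1, u) (1, v) := hq 1 u v (by rw [h])
  exact hhom.lift Prod.snd fun _ _ h => h.oneStep

/-- A left cancellative monoid `M` generated by a finite set `A` (via `f : A → M`) is
finitely presentable (over `A`) if and only if its right Cayley graph over `A` is
`n`-quasi-simply-connected for some `n ∈ ℕ`. -/
theorem stmt_8 {A M : Type} [Fintype A] [Monoid M]
    (hcancel : ∀ x a b : M, x * a = x * b → a = b)
    (f : A → M) (hgen : Function.Surjective (wordProd f)) :
    (∃ R : Set (List A × List A), R.Finite ∧ Presents f R) ↔ ∃ n : ℕ, NQSC f n := by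
  have : IsLeftCancelMul M := ⟨fun x _ _ h => hcancel x _ _ h⟩
  exact ⟨fun ⟨_, hR, hpres⟩ => nqsc_of_presents hR hpres,
    fun ⟨n, hq⟩ => ⟨_, boundedRelations_finite f n, presents_boundedRelations hgen hq⟩⟩
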